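/- arXiv:2502.08126 — 7 statements merged into one kernel-verified Lean document; each statement's English description precedes it below -/
import Mathlib

section
/- For any real numbers c < d and any function f : [c,d] → ℝ such that ∫_c^d (y-c)(d-y)|f'(y)|² dy < ∞, one has ∫_c^d |f(y) - (1/(d-c))∫_c^d f(z) dz|² dy ≤ (1/2) ∫_c^d (y-c)(d-y)|f'(y)|² dy. -/
/-!
The mean minimises `q ↦ ∫ (f - q)²`, so it suffices to bound `∫ (f - f m)²` for the
midpoint `m = (c + d) / 2`. On `[m, d]`, Cauchy–Schwarz applied to `f y - f m = ∫_m^y f'`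
gives `(f y - f m)² ≤ (y - m) ∫_m^y f'²`, and exchanging the order of integration turns
`∫_m^d (y - m) ∫_m^y f'²` into `∫_m^d ((d - m)² - (t - m)²) / 2 · f'(t)² dt`. Because `m`
is the midpoint, this weight is exactly `(t - c) (d - t) / 2`. The half `[c, m]` is the
mirror image.
-/

open MeasureTheory Set

section IntervalAverage

variable {a b : ℝ} {f : ℝ → ℝ}

theorem intervalIntegral.integral_sub_const_sq (hf : IntervalIntegrable f volume a b)
    (hf2 : IntervalIntegrable (fun x => f x ^ 2) volume a b) (q : ℝ) :
    ∫ x in a..b, (f x - q) ^ 2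
      = (∫ x in a..b, f x ^ 2) - 2 * q * (∫ x in a..b, f x) + (b - a) * q ^ 2 := by
  simp_rw [sub_sq]
  rw [intervalIntegral.integral_add (hf2.sub ((hf.const_mul 2).mul_const q))
      intervalIntegrable_const,
    intervalIntegral.integral_sub hf2 ((hf.const_mul 2).mul_const q),
    intervalIntegral.integral_mul_const, intervalIntegral.integral_const_mul,
    intervalIntegral.integral_const, smul_eq_mul]
  ring

theorem intervalIntegral.integral_sub_average_sq_le (hab : a ≤ b)
    (hf : IntervalIntegrable f volume a b)
    (hf2 : IntervalIntegrable (fun x => f x ^ 2) volume a b) (q : ℝ) :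
    ∫ x in a..b, (f x - 1 / (b - a) * ∫ z in a..b, f z) ^ 2
      ≤ ∫ x in a..b, (f x - q) ^ 2 := by
  rw [integral_sub_const_sq hf hf2, integral_sub_const_sq hf hf2]
  rcases hab.eq_or_lt with rfl | hlt
  · simp
  obtain ⟨A, hA⟩ : ∃ A, ∫ z in a..b, f z = (b - a) * A :=
    ⟨(∫ z in a..b, f z) / (b - a), by field_simp⟩
  rw [hA, one_div, inv_mul_cancel_left₀ (sub_pos.2 hlt).ne']
  nlinarith [mul_nonneg (sub_pos.2 hlt).le (sq_nonneg (A - q))]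

theorem intervalIntegral.sq_integral_le_mul_integral_sq (hab : a ≤ b)
    (hf : IntervalIntegrable f volume a b)
    (hf2 : IntervalIntegrable (fun x => f x ^ 2) volume a b) :
    (∫ x in a..b, f x) ^ 2 ≤ (b - a) * ∫ x in a..b, f x ^ 2 := by
  rcases hab.eq_or_lt with rfl | hlt
  · simp
  have h0 : 0 ≤ ∫ x in a..b, (f x - (∫ x in a..b, f x) / (b - a)) ^ 2 :=
    intervalIntegral.integral_nonneg hab fun _ _ => sq_nonneg _
  have hba : 0 < b - a := sub_pos.2 hlt
  rw [integral_sub_const_sq hf hf2] at h0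
  field_simp at h0
  nlinarith

end IntervalAverage

theorem IntegrableOn.of_mul_left_of_le {α : Type*} [MeasurableSpace α] {μ : Measure α}
    {s : Set α} {w g : α → ℝ} {δ : ℝ} (hs : MeasurableSet s) (hδ : 0 < δ)
    (hw : ∀ x ∈ s, δ ≤ w x) (hg : AEStronglyMeasurable g (μ.restrict s))
    (h : IntegrableOn (fun x => w x * g x) s μ) : IntegrableOn g s μ := by
  refine Integrable.mono' (h.norm.const_mul δ⁻¹) hg ?_
  filter_upwards [ae_restrict_mem hs] with x hx
  calc ‖g x‖ = δ⁻¹ * (δ * ‖g x‖) := by field_simp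
    _ ≤ δ⁻¹ * ‖w x * g x‖ := by
      rw [norm_mul]
      gcongr
      exact (hw x hx).trans (Real.le_norm_self _)

theorem IntegrableOn.of_sq {α : Type*} [MeasurableSpace α] {μ : Measure α}
    {s : Set α} {g : α → ℝ} (hs : μ s ≠ ⊤) (hg : AEStronglyMeasurable g (μ.restrict s))
    (h : IntegrableOn (fun x => g x ^ 2) s μ) : IntegrableOn g s μ :=
  have := isFiniteMeasure_restrict.2 hs
  ((memLp_two_iff_integrable_sq hg).2 h).integrable one_le_two

section Triangle

variable {a b : ℝ} {h : ℝ → ℝ}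

noncomputable def triangleKernel (a : ℝ) (h : ℝ → ℝ) (y t : ℝ) : ℝ :=
  if t < y then (y - a) * h t else 0

theorem measurable_triangleKernel (hm : Measurable h) :
    Measurable (Function.uncurry (triangleKernel a h)) :=
  Measurable.ite (measurableSet_lt measurable_snd measurable_fst)
    ((measurable_fst.sub_const a).mul (hm.comp measurable_snd)) measurable_const

theorem triangleKernel_nonneg (h0 : ∀ t, 0 ≤ h t) {y : ℝ} (hy : a ≤ y) (t : ℝ) :
    0 ≤ triangleKernel a h y t := by
  unfold triangleKernel
  split_ifs
  exacts [mul_nonneg (sub_nonneg.2 hy) (h0 t), le_rfl]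

theorem setIntegral_triangleKernel_left {y : ℝ} (hy : y ≤ b) :
    ∫ t in Ioo a b, triangleKernel a h y t = (y - a) * ∫ t in Ioo a y, h t := by
  have : triangleKernel a h y = (Iio y).indicator fun t => (y - a) * h t := by
    ext t; simp [triangleKernel, indicator_apply]
  rw [this, setIntegral_indicator measurableSet_Iio, Ioo_inter_Iio, min_eq_right hy,
    integral_const_mul]

theorem setIntegral_triangleKernel_right {t : ℝ} (ht : t ∈ Icc a b) :
    ∫ y in Ioo a b, triangleKernel a h y t = ((b - a) ^ 2 - (t - a) ^ 2) / 2 * h t := by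
  have : (triangleKernel a h · t) = (Ioi t).indicator fun y => (y - a) * h t := by
    ext y; simp [triangleKernel, indicator_apply]
  rw [this, setIntegral_indicator measurableSet_Ioi, Ioo_inter_Ioi, max_eq_right ht.1,
    integral_mul_const, ← integral_Ioc_eq_integral_Ioo, ← intervalIntegral.integral_of_le ht.2,
    intervalIntegral.integral_comp_sub_right (fun y => y), integral_id]

theorem integrable_triangleKernel (hm : Measurable h) (h0 : ∀ t, 0 ≤ h t)
    (hint : IntegrableOn (fun t => (b - t) * h t) (Ioo a b)) :
    Integrable (Function.uncurry (triangleKernel a h))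
      ((volume.restrict (Ioo a b)).prod (volume.restrict (Ioo a b))) := by
  have := isFiniteMeasure_restrict.2 (measure_Ioo_lt_top (μ := volume) (a := a) (b := b)).ne
  refine (integrable_prod_iff' (measurable_triangleKernel hm).aestronglyMeasurable).2 ⟨?_, ?_⟩
  · refine .of_forall fun t => Integrable.mono' (integrable_const ((b - a) * h t))
      ((measurable_triangleKernel hm).comp measurable_prodMk_right).aestronglyMeasurable ?_
    filter_upwards [ae_restrict_mem measurableSet_Ioo] with y hy
    rw [Function.uncurry_apply_pair, Real.norm_of_nonneg (triangleKernel_nonneg h0 hy.1.le t)]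
    unfold triangleKernel
    split_ifs
    exacts [mul_le_mul_of_nonneg_right (by linarith [hy.2]) (h0 t),
      mul_nonneg (by linarith [hy.1, hy.2]) (h0 t)]
  · refine Integrable.mono' (hint.const_mul (b - a)) ((measurable_triangleKernel hm).norm
      |>.stronglyMeasurable.integral_prod_left').aestronglyMeasurable ?_
    filter_upwards [ae_restrict_mem measurableSet_Ioo] with t ht
    have hnorm :
        ∫ y in Ioo a b, ‖triangleKernel a h y t‖ = ∫ y in Ioo a b, triangleKernel a h y t :=
      setIntegral_congr_fun measurableSet_Ioo fun y hy =>
        Real.norm_of_nonneg (triangleKernel_nonneg h0 hy.1.le t)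
    have hK0 : 0 ≤ ((b - a) ^ 2 - (t - a) ^ 2) / 2 := by nlinarith [ht.1, ht.2]
    simp only [Function.uncurry_apply_pair]
    rw [hnorm, setIntegral_triangleKernel_right (Ioo_subset_Icc_self ht),
      Real.norm_of_nonneg (mul_nonneg hK0 (h0 t)), ← mul_assoc]
    exact mul_le_mul_of_nonneg_right (by nlinarith [ht.1, ht.2]) (h0 t)

theorem integrableOn_mul_setIntegral_Ioo (hm : Measurable h) (h0 : ∀ t, 0 ≤ h t)
    (hint : IntegrableOn (fun t => (b - t) * h t) (Ioo a b)) :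
    IntegrableOn (fun y => (y - a) * ∫ t in Ioo a y, h t) (Ioo a b) :=
  (integrable_triangleKernel hm h0 hint).integral_prod_left.congr <|
    ae_restrict_of_forall_mem measurableSet_Ioo fun _ hy => setIntegral_triangleKernel_left hy.2.le

theorem integral_mul_setIntegral_Ioo (hm : Measurable h) (h0 : ∀ t, 0 ≤ h t)
    (hint : IntegrableOn (fun t => (b - t) * h t) (Ioo a b)) :
    ∫ y in Ioo a b, (y - a) * ∫ t in Ioo a y, h t
      = ∫ t in Ioo a b, ((b - a) ^ 2 - (t - a) ^ 2) / 2 * h t :=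
  calc ∫ y in Ioo a b, (y - a) * ∫ t in Ioo a y, h t
      = ∫ y in Ioo a b, ∫ t in Ioo a b, triangleKernel a h y t :=
        setIntegral_congr_fun measurableSet_Ioo fun _ hy =>
          (setIntegral_triangleKernel_left hy.2.le).symm
    _ = ∫ t in Ioo a b, ∫ y in Ioo a b, triangleKernel a h y t :=
        integral_integral_swap (integrable_triangleKernel hm h0 hint)
    _ = ∫ t in Ioo a b, ((b - a) ^ 2 - (t - a) ^ 2) / 2 * h t :=
        setIntegral_congr_fun measurableSet_Ioo fun _ ht =>
          setIntegral_triangleKernel_right (Ioo_subset_Icc_self ht)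

end Triangle

theorem integral_sub_left_sq_le {a b : ℝ} {f : ℝ → ℝ} (hab : a ≤ b)
    (hf : ∀ y ∈ Ico a b, DifferentiableAt ℝ f y)
    (hint : IntervalIntegrable (fun t => (b - t) * deriv f t ^ 2) volume a b) :
    ∫ y in a..b, (f y - f a) ^ 2
      ≤ ∫ t in a..b, ((b - a) ^ 2 - (t - a) ^ 2) / 2 * deriv f t ^ 2 := by
  rw [intervalIntegrable_iff_integrableOn_Ioo_of_le hab] at hint
  have hmeas : Measurable fun t => deriv f t ^ 2 := (measurable_deriv f).pow_const 2
  have hpointwise :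
      ∀ y ∈ Ioo a b, (f y - f a) ^ 2 ≤ (y - a) * ∫ t in Ioo a y, deriv f t ^ 2 := by
    intro y hy
    have hsq : IntegrableOn (fun t => deriv f t ^ 2) (Ioo a y) :=
      IntegrableOn.of_mul_left_of_le measurableSet_Ioo (sub_pos.2 hy.2)
        (fun t ht => by linarith [ht.2]) hmeas.aestronglyMeasurable
        (hint.mono_set (Ioo_subset_Ioo_right hy.2.le))
    have hd : IntegrableOn (deriv f) (Ioo a y) := IntegrableOn.of_sq
      measure_Ioo_lt_top.ne (measurable_deriv f).aestronglyMeasurable hsq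
    rw [← intervalIntegrable_iff_integrableOn_Ioo_of_le hy.1.le] at hsq hd
    have hftc : ∫ t in a..y, deriv f t = f y - f a :=
      intervalIntegral.integral_deriv_eq_sub (fun x hx => hf x
        ⟨(uIcc_of_le hy.1.le ▸ hx).1, (uIcc_of_le hy.1.le ▸ hx).2.trans_lt hy.2⟩) hd
    calc (f y - f a) ^ 2 = (∫ t in a..y, deriv f t) ^ 2 := by rw [hftc]
      _ ≤ (y - a) * ∫ t in a..y, deriv f t ^ 2 :=
        intervalIntegral.sq_integral_le_mul_integral_sq hy.1.le hd hsq
      _ = (y - a) * ∫ t in Ioo a y, deriv f t ^ 2 := by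
        rw [intervalIntegral.integral_of_le hy.1.le, integral_Ioc_eq_integral_Ioo]
  simp only [intervalIntegral.integral_of_le hab, integral_Ioc_eq_integral_Ioo]
  rw [← integral_mul_setIntegral_Ioo hmeas (fun t => sq_nonneg _) hint]
  exact integral_mono_of_nonneg (ae_of_all _ fun y => sq_nonneg _)
    (integrableOn_mul_setIntegral_Ioo hmeas (fun t => sq_nonneg _) hint)
    (ae_restrict_of_forall_mem measurableSet_Ioo hpointwise)

theorem integral_sub_right_sq_le {a b : ℝ} {f : ℝ → ℝ} (hab : a ≤ b)
    (hf : ∀ y ∈ Ioc a b, DifferentiableAt ℝ f y)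
    (hint : IntervalIntegrable (fun t => (t - a) * deriv f t ^ 2) volume a b) :
    ∫ y in a..b, (f y - f b) ^ 2
      ≤ ∫ t in a..b, ((b - a) ^ 2 - (b - t) ^ 2) / 2 * deriv f t ^ 2 := by
  have hf' : ∀ y ∈ Ico (-b) (-a), DifferentiableAt ℝ (fun x => f (-x)) y := fun y hy =>
    differentiableAt_comp_neg.2 (hf (-y) ⟨by linarith [hy.2], by linarith [hy.1]⟩)
  have hint' : IntervalIntegrable (fun t => (-a - t) * deriv (fun x => f (-x)) t ^ 2) volume
      (-b) (-a) := by
    simpa [deriv_comp_neg, sub_eq_add_neg, add_comm] using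
      ((IntervalIntegrable.iff_comp_neg (f := fun t => (t - a) * deriv f t ^ 2)).1 hint).symm
  have h := integral_sub_left_sq_le (neg_le_neg hab) hf' hint'
  simp only [deriv_comp_neg, neg_sq, neg_neg] at h
  have hL := intervalIntegral.integral_comp_neg (a := -b) (b := -a) fun y => (f y - f b) ^ 2
  have hR := intervalIntegral.integral_comp_neg (a := -b) (b := -a)
    fun t => ((b - a) ^ 2 - (b - t) ^ 2) / 2 * deriv f t ^ 2
  simp only [neg_neg] at hL hR
  rw [← hL, ← hR]
  convert h using 4 with t
  ring

theorem integral_sub_sq_le_of_mem_Ioo {c d m : ℝ} {f : ℝ → ℝ} (hm : m ∈ Ioo c d)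
    (hfc : ContinuousOn f (Icc c d)) (hf : ∀ y ∈ Ioo c d, DifferentiableAt ℝ f y)
    (hfin : IntegrableOn (fun y => (y - c) * (d - y) * deriv f y ^ 2) (Ioo c d)) :
    ∫ y in c..d, (f y - f m) ^ 2
      ≤ (∫ t in c..m, ((m - c) ^ 2 - (m - t) ^ 2) / 2 * deriv f t ^ 2)
        + ∫ t in m..d, ((d - m) ^ 2 - (t - m) ^ 2) / 2 * deriv f t ^ 2 := by
  obtain ⟨hcm, hmd⟩ := hm
  have hleft : IntervalIntegrable (fun t => (t - c) * deriv f t ^ 2) volume c m :=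
    (intervalIntegrable_iff_integrableOn_Ioo_of_le hcm.le).2 <|
      IntegrableOn.of_mul_left_of_le (w := fun t => d - t) measurableSet_Ioo (sub_pos.2 hmd)
        (fun t ht => by linarith [ht.2]) (by fun_prop)
        ((hfin.mono_set (Ioo_subset_Ioo_right hmd.le)).congr_fun (fun t _ => by ring)
          measurableSet_Ioo)
  have hright : IntervalIntegrable (fun t => (d - t) * deriv f t ^ 2) volume m d :=
    (intervalIntegrable_iff_integrableOn_Ioo_of_le hmd.le).2 <|
      IntegrableOn.of_mul_left_of_le (w := fun t => t - c) measurableSet_Ioo (sub_pos.2 hcm)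
        (fun t ht => by linarith [ht.1]) (by fun_prop)
        ((hfin.mono_set (Ioo_subset_Ioo_left hcm.le)).congr_fun (fun t _ => by ring)
          measurableSet_Ioo)
  have hsq : IntervalIntegrable (fun y => (f y - f m) ^ 2) volume c d :=
    ((hfc.sub continuousOn_const).pow 2).intervalIntegrable_of_Icc (hcm.trans hmd).le
  have hm_mem : m ∈ uIcc c d := Icc_subset_uIcc ⟨hcm.le, hmd.le⟩
  rw [← intervalIntegral.integral_add_adjacent_intervals
    (hsq.mono_set (uIcc_subset_uIcc left_mem_uIcc hm_mem))
    (hsq.mono_set (uIcc_subset_uIcc hm_mem right_mem_uIcc))]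
  exact add_le_add
    (integral_sub_right_sq_le hcm.le (fun y hy => hf y ⟨hy.1, hy.2.trans_lt hmd⟩) hleft)
    (integral_sub_left_sq_le hmd.le (fun y hy => hf y ⟨hcm.trans_le hy.1, hy.2⟩) hright)

theorem integral_sub_midpoint_sq_le {c d : ℝ} {f : ℝ → ℝ} (hcd : c < d)
    (hfc : ContinuousOn f (Icc c d)) (hf : ∀ y ∈ Ioo c d, DifferentiableAt ℝ f y)
    (hfin : IntegrableOn (fun y => (y - c) * (d - y) * deriv f y ^ 2) (Ioo c d)) :
    ∫ y in c..d, (f y - f ((c + d) / 2)) ^ 2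
      ≤ 1 / 2 * ∫ y in c..d, (y - c) * (d - y) * deriv f y ^ 2 := by
  set m := (c + d) / 2 with hm
  have hm_mem : m ∈ uIcc c d := Icc_subset_uIcc ⟨by linarith, by linarith⟩
  have hw : IntervalIntegrable (fun y => 1 / 2 * ((y - c) * (d - y) * deriv f y ^ 2))
      volume c d :=
    ((intervalIntegrable_iff_integrableOn_Ioo_of_le hcd.le).2 hfin).const_mul _
  calc ∫ y in c..d, (f y - f m) ^ 2
      ≤ (∫ t in c..m, ((m - c) ^ 2 - (m - t) ^ 2) / 2 * deriv f t ^ 2)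
        + ∫ t in m..d, ((d - m) ^ 2 - (t - m) ^ 2) / 2 * deriv f t ^ 2 :=
        integral_sub_sq_le_of_mem_Ioo ⟨by linarith, by linarith⟩ hfc hf hfin
    _ = (∫ t in c..m, 1 / 2 * ((t - c) * (d - t) * deriv f t ^ 2))
        + ∫ t in m..d, 1 / 2 * ((t - c) * (d - t) * deriv f t ^ 2) := by
      congr 1 <;> refine intervalIntegral.integral_congr fun t _ => ?_ <;> rw [hm] <;> ring
    _ = 1 / 2 * ∫ y in c..d, (y - c) * (d - y) * deriv f y ^ 2 := by
      rw [intervalIntegral.integral_add_adjacent_intervals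
          (hw.mono_set (uIcc_subset_uIcc left_mem_uIcc hm_mem))
          (hw.mono_set (uIcc_subset_uIcc hm_mem right_mem_uIcc)),
        intervalIntegral.integral_const_mul]

/-- Poincaré-type inequality with constant 1/2 independent of the interval length. -/
theorem poincare_type_inequality (c d : ℝ) (hcd : c < d) (f : ℝ → ℝ)
    (hf : ∀ y ∈ Set.Icc c d, DifferentiableAt ℝ f y)
    (hfin : IntegrableOn (fun y => (y - c) * (d - y) * (deriv f y) ^ 2) (Set.Ioo c d)) :
    ∫ y in c..d, |f y - (1 / (d - c)) * ∫ z in c..d, f z| ^ 2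
      ≤ (1 / 2) * ∫ y in c..d, (y - c) * (d - y) * (deriv f y) ^ 2 := by
  have hfc : ContinuousOn f (Icc c d) := fun y hy => (hf y hy).continuousAt.continuousWithinAt
  simp only [sq_abs]
  calc ∫ y in c..d, (f y - 1 / (d - c) * ∫ z in c..d, f z) ^ 2
      ≤ ∫ y in c..d, (f y - f ((c + d) / 2)) ^ 2 :=
        intervalIntegral.integral_sub_average_sq_le hcd.le (hfc.intervalIntegrable_of_Icc hcd.le)
          ((hfc.pow 2).intervalIntegrable_of_Icc hcd.le) _
    _ ≤ _ :=
        integral_sub_midpoint_sq_le hcd hfc (fun y hy => hf y (Ioo_subset_Icc_self hy)) hfin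
end

section
/- For all real Z ≥ 0 and γ > 1, the inequality Z^(γ+1) - (γ+1)Z + γ ≥ γ(Z-1)² holds. -/
/-- For all real `Z ≥ 0` and `γ > 1`, `Z^(γ+1) - (γ+1)Z + γ ≥ γ(Z-1)²`. -/
theorem algebraic_inequality_rpow (Z γ : ℝ) (hZ : 0 ≤ Z) (hγ : 1 < γ) :
    γ * (Z - 1) ^ 2 ≤ Z ^ (γ + 1) - (γ + 1) * Z + γ := by
  rcases eq_or_lt_of_le hZ with h0 | h0
  · rw [← h0, Real.zero_rpow (by linarith)]
    ring_nf
    nlinarith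
  · have hb : 1 + γ * (Z - 1) ≤ Z ^ γ := by
      have := one_add_mul_self_le_rpow_one_add (by linarith : (-1:ℝ) ≤ Z - 1) hγ.le
      simpa using this
    have hmul : Z * (1 + γ * (Z - 1)) ≤ Z * Z ^ γ :=
      mul_le_mul_of_nonneg_left hb hZ
    have hr : Z ^ (γ + 1) = Z * Z ^ γ := by
      rw [Real.rpow_add h0, Real.rpow_one, mul_comm]
    nlinarith [hmul, hr]
end

section
/- Let γ > 1, p(v) = v^{-γ}, and define the relative pressure p(v|w) := p(v) - p(w) - p'(w)(v-w). Then for all v, w > 0 with v ≠ w, one has (v-w)²/(w·v·p(v|w)) ≤ w^γ/γ. -/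
/-- Pressure `p(v) = v^(-γ)`. -/
noncomputable def pres (γ v : ℝ) : ℝ := v ^ (-γ)

/-- Relative pressure `p(v|w) = p(v) - p(w) - p'(w)(v-w)` with `p'(w) = -γ w^(-γ-1)`. -/
noncomputable def relPres (γ v w : ℝ) : ℝ :=
  pres γ v - pres γ w - (-γ * w ^ (-γ - 1)) * (v - w)

/-! Clearing denominators, the bound becomes Bernoulli's inequality
`(w/v)^γ ≥ 1 + γ (w/v - 1)` for `γ ≥ 1`. -/

open Real

lemma rpow_mul_mul_mul_relPres {γ v w : ℝ} (hv : 0 < v) (hw : 0 < w) :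
    w ^ γ * (w * v * relPres γ v w) =
      w * v * ((w / v) ^ γ - 1 - γ * (w / v - 1)) + γ * (v - w) ^ 2 := by
  have hv' : w ^ γ * v ^ (-γ) = (w / v) ^ γ := by
    rw [rpow_neg hv.le, div_rpow hw.le hv.le, div_eq_mul_inv]
  have hw' : w ^ γ * w ^ (-γ) = 1 := by
    rw [← rpow_add hw, add_neg_cancel, rpow_zero]
  have hw'' : w ^ γ * w ^ (-γ - 1) = w⁻¹ := by
    rw [← rpow_add hw, show γ + (-γ - 1) = -1 by ring, rpow_neg_one]
  calc w ^ γ * (w * v * relPres γ v w)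
      = w * v * (w ^ γ * v ^ (-γ) - w ^ γ * w ^ (-γ)
          + γ * (w ^ γ * w ^ (-γ - 1)) * (v - w)) := by
        simp only [relPres, pres]; ring
    _ = w * v * ((w / v) ^ γ - 1 - γ * (w / v - 1)) + γ * (v - w) ^ 2 := by
        rw [hv', hw', hw'']
        field_simp
        ring

lemma mul_sq_sub_le_rpow_mul_mul_mul_relPres {γ v w : ℝ} (hγ : 1 ≤ γ) (hv : 0 < v)
    (hw : 0 < w) : γ * (v - w) ^ 2 ≤ w ^ γ * (w * v * relPres γ v w) := by
  have bernoulli := one_add_mul_self_le_rpow_one_add (s := w / v - 1)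
    (by linarith [div_pos hw hv]) hγ
  rw [add_sub_cancel] at bernoulli
  have : 0 ≤ w * v * ((w / v) ^ γ - 1 - γ * (w / v - 1)) :=
    mul_nonneg (by positivity) (by linarith)
  rw [rpow_mul_mul_mul_relPres hv hw]
  linarith

lemma relPres_nonneg {γ v w : ℝ} (hγ : 1 ≤ γ) (hv : 0 < v) (hw : 0 < w) :
    0 ≤ relPres γ v w := by
  have : 0 ≤ w ^ γ * (w * v) * relPres γ v w := by
    have : 0 ≤ γ * (v - w) ^ 2 := mul_nonneg (by linarith) (sq_nonneg _)
    rw [mul_assoc]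
    exact this.trans (mul_sq_sub_le_rpow_mul_mul_mul_relPres hγ hv hw)
  exact nonneg_of_mul_nonneg_right this (by positivity)

theorem relative_pressure_quotient_bound_general (γ : ℝ) (hγ : 1 < γ) (v w : ℝ)
    (hv : 0 < v) (hw : 0 < w) :
    (v - w) ^ 2 / (w * v * relPres γ v w) ≤ w ^ γ / γ := by
  have hD : 0 ≤ w * v * relPres γ v w := by
    have := relPres_nonneg hγ.le hv hw
    positivity
  rcases hD.eq_or_lt with hD | hD
  -- a vanishing denominator makes the quotient `0` in Lean
  · rw [← hD, div_zero]
    positivity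
  · rw [div_le_div_iff₀ hD (by linarith), mul_comm _ γ]
    exact mul_sq_sub_le_rpow_mul_mul_mul_relPres hγ.le hv hw

/-- For `γ > 1` and `v, w > 0` with `v ≠ w`, `(v-w)²/(w·v·p(v|w)) ≤ w^γ/γ`. -/
theorem relative_pressure_quotient_bound (γ : ℝ) (hγ : 1 < γ) (v w : ℝ)
    (hv : 0 < v) (hw : 0 < w) (hvw : v ≠ w) :
    (v - w) ^ 2 / (w * v * relPres γ v w) ≤ w ^ γ / γ :=
  relative_pressure_quotient_bound_general γ hγ v w hv hw
end

section
/- Let γ > 1, p(v) = v^{-γ}. Fix v* > 0. Then there exist constants C > 0 and δ* > 0 such that for any 0 < δ < δ* and any v, w > 0 with |v - w| < δ and w in a fixed compact neighborhood of v*, one has p(v|w) ≤ ((γ+1)/(2γ p(w)) + C|p(v)-p(w)|)·|p(v)-p(w)|². -/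
/-!
Both sides scale like `p(w)`: with `s = v / w` and `x = s^(-γ) - 1`, so that
`p(v) - p(w) = p(w) x`, one has `p(v|w) = p(w) (x + γ (s - 1))` and `s = (1 + x)^(-1/γ)`.
The second-order Taylor expansion of `(1 + x)^(-1/γ)` turns this into
`p(w) ((γ+1)/(2γ) x² + O(|x|³))`, and the cubic remainder is absorbed into
`C |p(v) - p(w)|³` because `p(w) ≥ p(b)` on `[a, b]`. Closeness of `v` to `w` with `w ≥ a`
keeps `s` near `1`, hence `|x| ≤ 1/2`.
-/

open Set

theorem Convex.norm_image_le_of_norm_deriv_le_mul_abs_pow {E : Type*} [NormedAddCommGroup E]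
    [NormedSpace ℝ E] {f f' : ℝ → E} {s : Set ℝ} {C : ℝ} {n : ℕ} (hs : Convex ℝ s)
    (h0 : (0 : ℝ) ∈ s) (hf0 : f 0 = 0) (hf : ∀ y ∈ s, HasDerivAt f (f' y) y)
    (bound : ∀ y ∈ s, ‖f' y‖ ≤ C * |y| ^ n) {x : ℝ} (hx : x ∈ s) :
    ‖f x‖ ≤ C * |x| ^ (n + 1) := by
  rcases eq_or_ne x 0 with rfl | hx0
  · simp [hf0]
  have hC : 0 ≤ C :=
    nonneg_of_mul_nonneg_left ((norm_nonneg _).trans (bound x hx)) (by positivity)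
  have hsub : uIcc 0 x ⊆ s := hs.ordConnected.uIcc_subset h0 hx
  have key := (convex_uIcc (0 : ℝ) x).norm_image_sub_le_of_norm_hasDerivWithin_le
    (f := f) (f' := f') (C := C * |x| ^ n)
    (fun y hy => (hf y (hsub hy)).hasDerivWithinAt)
    (fun y hy => (bound y (hsub hy)).trans <| mul_le_mul_of_nonneg_left
      (pow_le_pow_left₀ (abs_nonneg y) (by simpa using abs_sub_left_of_mem_uIcc hy) n) hC)
    left_mem_uIcc right_mem_uIcc
  simpa [hf0, pow_succ, mul_assoc] using key

theorem hasDerivAt_one_add_rpow (c : ℝ) {x : ℝ} (hx : 0 < 1 + x) :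
    HasDerivAt (fun y => (1 + y) ^ c) (c * (1 + x) ^ (c - 1)) x := by
  simpa using ((hasDerivAt_id x).const_add 1).rpow_const (p := c) (Or.inl hx.ne')

theorem exists_abs_one_add_rpow_sub_taylor_le (c : ℝ) :
    ∃ K > 0, ∀ x : ℝ, |x| ≤ 1/2 →
      |(1 + x) ^ c - (1 + c * x + c * (c - 1) / 2 * x ^ 2)| ≤ K * |x| ^ 3 := by
  set I := Icc (-(1/2) : ℝ) (1/2) with hI
  have hs : Convex ℝ I := convex_Icc _ _
  have h0 : (0 : ℝ) ∈ I := by norm_num [hI]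
  have hpos : ∀ y ∈ I, 0 < 1 + y := fun y hy => by linarith [hy.1]
  obtain ⟨M, hM⟩ := isCompact_Icc.exists_bound_of_continuousOn
    (f := fun y : ℝ => c * (c - 1) * (c - 2) * (1 + y) ^ (c - 3)) <| fun y hy =>
      (((hasDerivAt_one_add_rpow (c - 3) (hpos y hy)).const_mul _).continuousAt).continuousWithinAt
  -- The remainder and its first two derivatives vanish at `0` and the third derivative is
  -- bounded by `M`, so integrating the bound three times gives `M |x|³`.
  have hd2 : ∀ y ∈ I,
      HasDerivAt (fun y => c * (c - 1) * (1 + y) ^ (c - 2) - c * (c - 1))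
        (c * (c - 1) * (c - 2) * (1 + y) ^ (c - 3)) y := fun y hy =>
    (((hasDerivAt_one_add_rpow (c - 2) (hpos y hy)).const_mul (c * (c - 1))).sub_const
      (c * (c - 1))).congr_deriv (by rw [show c - 2 - 1 = c - 3 by ring]; ring)
  have hd1 : ∀ y ∈ I,
      HasDerivAt (fun y => c * (1 + y) ^ (c - 1) - (c + c * (c - 1) * y))
        (c * (c - 1) * (1 + y) ^ (c - 2) - c * (c - 1)) y := fun y hy =>
    (((hasDerivAt_one_add_rpow (c - 1) (hpos y hy)).const_mul c).sub
      (((hasDerivAt_id y).const_mul (c * (c - 1))).const_add c)).congr_deriv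
        (by rw [show c - 1 - 1 = c - 2 by ring]; ring)
  have hd0 : ∀ y ∈ I,
      HasDerivAt (fun y => (1 + y) ^ c - (1 + c * y + c * (c - 1) / 2 * y ^ 2))
        (c * (1 + y) ^ (c - 1) - (c + c * (c - 1) * y)) y := fun y hy =>
    ((hasDerivAt_one_add_rpow c (hpos y hy)).sub
      ((((hasDerivAt_id y).const_mul c).const_add 1).add
        ((hasDerivAt_pow 2 y).const_mul (c * (c - 1) / 2)))).congr_deriv (by simp; ring)
  have hb2 := fun x (hx : x ∈ I) =>
    hs.norm_image_le_of_norm_deriv_le_mul_abs_pow h0 (by simp) hd2 (n := 0)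
      (fun y hy => by simpa using hM y hy) hx
  have hb1 := fun x (hx : x ∈ I) =>
    hs.norm_image_le_of_norm_deriv_le_mul_abs_pow h0 (by simp) hd1 hb2 hx
  refine ⟨max M 1, by positivity, fun x hx => ?_⟩
  calc _ ≤ M * |x| ^ 3 :=
        hs.norm_image_le_of_norm_deriv_le_mul_abs_pow h0 (by simp) hd0 hb1 (abs_le.1 hx)
    _ ≤ max M 1 * |x| ^ 3 := by gcongr; exact le_max_left _ _

theorem exists_rpow_neg_sub_one_add_mul_sub_one_le {γ : ℝ} (hγ : 0 < γ) :
    ∃ K > 0, ∀ s > 0, |s ^ (-γ) - 1| ≤ 1/2 →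
      s ^ (-γ) - 1 + γ * (s - 1) ≤
        (γ + 1) / (2 * γ) * (s ^ (-γ) - 1) ^ 2 + K * |s ^ (-γ) - 1| ^ 3 := by
  obtain ⟨K, hK, htaylor⟩ := exists_abs_one_add_rpow_sub_taylor_le (-γ⁻¹)
  refine ⟨γ * K, by positivity, fun s hs hx => ?_⟩
  set x := s ^ (-γ) - 1
  have hsx : (1 + x) ^ (-γ⁻¹) = s := by
    rw [add_sub_cancel, ← Real.rpow_mul hs.le, neg_mul_neg, mul_inv_cancel₀ hγ.ne',
      Real.rpow_one]
  have hs_le := (abs_le.1 (htaylor x hx)).2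
  rw [hsx] at hs_le
  have := mul_le_mul_of_nonneg_left hs_le hγ.le
  field_simp at this ⊢
  linear_combination this

theorem pres_eq_mul_rpow_div {γ v w : ℝ} (hv : 0 < v) (hw : 0 < w) :
    pres γ v = pres γ w * (v / w) ^ (-γ) := by
  rw [pres, pres, ← Real.mul_rpow hw.le (div_pos hv hw).le, mul_div_cancel₀ _ hw.ne']

theorem relPres_eq_mul {γ v w : ℝ} (hv : 0 < v) (hw : 0 < w) :
    relPres γ v w = pres γ w * ((v / w) ^ (-γ) - 1 + γ * (v / w - 1)) := by
  rw [relPres, pres_eq_mul_rpow_div hv hw, sub_eq_add_neg (-γ), Real.rpow_add hw,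
    Real.rpow_neg_one, pres]
  field_simp
  ring

theorem exists_relPres_le {γ : ℝ} (hγ : 0 < γ) :
    ∃ K > 0, ∀ v w : ℝ, 0 < v → 0 < w → |(v / w) ^ (-γ) - 1| ≤ 1/2 →
      relPres γ v w ≤
        ((γ + 1) / (2 * γ * pres γ w) + K / pres γ w ^ 2 * |pres γ v - pres γ w|) *
          |pres γ v - pres γ w| ^ 2 := by
  obtain ⟨K, hK, hbound⟩ := exists_rpow_neg_sub_one_add_mul_sub_one_le hγ
  refine ⟨K, hK, fun v w hv hw hX => ?_⟩
  have hP : 0 < pres γ w := Real.rpow_pos_of_pos hw _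
  rw [relPres_eq_mul hv hw, pres_eq_mul_rpow_div hv hw, ← mul_sub_one]
  calc pres γ w * ((v / w) ^ (-γ) - 1 + γ * (v / w - 1))
      ≤ pres γ w * ((γ + 1) / (2 * γ) * ((v / w) ^ (-γ) - 1) ^ 2 +
          K * |(v / w) ^ (-γ) - 1| ^ 3) :=
        mul_le_mul_of_nonneg_left (hbound _ (div_pos hv hw) hX) hP.le
    _ = _ := by
      rw [abs_mul, abs_of_pos hP, mul_pow, sq_abs, pow_succ |_|, sq_abs]
      field_simp

theorem relative_pressure_upper_bound_general (γ vs a b : ℝ) (hγ : 1 < γ)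
    (ha : 0 < a) (hav : a ≤ vs) (hvb : vs ≤ b) :
    ∃ C > 0, ∃ δstar > 0, ∀ δ : ℝ, 0 < δ → δ < δstar →
      ∀ v w : ℝ, 0 < v → 0 < w → |v - w| < δ → w ∈ Set.Icc a b →
        relPres γ v w ≤ ((γ + 1) / (2 * γ * pres γ w) + C * |pres γ v - pres γ w|) *
          |pres γ v - pres γ w| ^ 2 := by
  obtain ⟨K, hK, hrel⟩ := exists_relPres_le (zero_lt_one.trans hγ)
  obtain ⟨η, hη, hclose⟩ := Metric.continuousAt_iff.1
    (Real.continuousAt_rpow_const 1 (-γ) (Or.inl one_ne_zero)) (1/2) (by norm_num)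
  have hpb : 0 < pres γ b := Real.rpow_pos_of_pos (ha.trans_le (hav.trans hvb)) _
  refine ⟨K / pres γ b ^ 2, by positivity, a * η, by positivity, ?_⟩
  intro δ _ hδ v w hv hw hvw ⟨haw, hwb⟩
  have hs : |v / w - 1| < η := by
    rw [div_sub_one hw.ne', abs_div, abs_of_pos hw, div_lt_iff₀ hw]
    nlinarith
  have hX : |(v / w) ^ (-γ) - 1| ≤ 1/2 := by
    simpa [Real.dist_eq, Real.one_rpow] using (hclose hs).le
  have hP : pres γ b ≤ pres γ w := Real.rpow_le_rpow_of_nonpos hw hwb (by linarith)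
  refine (hrel v w hv hw hX).trans ?_
  gcongr

/-- Sharp upper bound of the relative pressure in terms of the pressure difference,
for `w` in a fixed compact neighborhood `[a,b]` of `v*` and `v` close to `w`. -/
theorem relative_pressure_upper_bound (γ vs a b : ℝ) (hγ : 1 < γ) (hvs : 0 < vs)
    (ha : 0 < a) (hav : a ≤ vs) (hvb : vs ≤ b) :
    ∃ C > 0, ∃ δstar > 0, ∀ δ : ℝ, 0 < δ → δ < δstar →
      ∀ v w : ℝ, 0 < v → 0 < w → |v - w| < δ → w ∈ Set.Icc a b →
        relPres γ v w ≤ ((γ + 1) / (2 * γ * pres γ w) + C * |pres γ v - pres γ w|) *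
          |pres γ v - pres γ w| ^ 2 :=
  relative_pressure_upper_bound_general γ vs a b hγ ha hav hvb
end

section
/- Let γ > 1, Q(v) = v^{1-γ}/(γ-1), p(v) = v^{-γ}. Fix v* > 0. Then there exist constants C > 0 and δ* > 0 such that for any 0 < δ < δ* and any v, w > 0 with |v - w| < δ and w in a fixed compact neighborhood of v*, one has Q(v|w) ≥ (p(w)^{-1/γ-1}/(2γ))|p(v)-p(w)|² − ((1+γ)/(3γ²)) p(w)^{-1/γ-2}|p(v)-p(w)|³. -/
/-- Internal energy `Q(v) = v^(1-γ)/(γ-1)`. -/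
noncomputable def Qint (γ v : ℝ) : ℝ := v ^ (1 - γ) / (γ - 1)

/-- Relative internal energy `Q(v|w) = Q(v) - Q(w) - Q'(w)(v-w)` with `Q'(w) = -p(w)`. -/
noncomputable def relQ (γ v w : ℝ) : ℝ :=
  Qint γ v - Qint γ w - (-(pres γ w)) * (v - w)

/-!
In the pressure variables `P = p(v)`, `W = p(w)`, let `h(P)` be `Q(v|w)` minus the quadratic term
plus `B (P - W)³` (which is at most `B |P - W|³`). Then `h(W) = 0` and
`h'(P) = (P - W)/γ · (P^(-α) - W^(-α) + α W^(-α-1) (P - W))` with `α = 1 + 1/γ`; the bracket is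
nonnegative by convexity of `x ↦ x^(-α)`, so `h` decreases up to `W` and increases after it.
The estimate therefore holds globally, for all `v, w > 0`.
-/

open Set

theorem le_of_hasDerivAt_of_sub_mul_nonneg {f f' : ℝ → ℝ} {c x : ℝ}
    (hf : ∀ y ∈ uIcc c x, HasDerivAt f (f' y) y) (hsign : ∀ y ∈ uIcc c x, 0 ≤ (y - c) * f' y) :
    f c ≤ f x := by
  have hcont : ContinuousOn f (uIcc c x) := fun y hy => (hf y hy).continuousAt.continuousWithinAt
  have hint : ∀ y ∈ interior (uIcc c x), HasDerivWithinAt f (f' y) (interior (uIcc c x)) y :=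
    fun y hy => (hf y (interior_subset hy)).hasDerivWithinAt
  rcases le_total c x with hcx | hxc
  · rw [uIcc_of_le hcx] at hcont hint hsign
    refine monotoneOn_of_hasDerivWithinAt_nonneg (convex_Icc c x) hcont hint (fun y hy => ?_)
      (left_mem_Icc.2 hcx) (right_mem_Icc.2 hcx) hcx
    rw [interior_Icc] at hy
    exact nonneg_of_mul_nonneg_right (hsign y (Ioo_subset_Icc_self hy)) (sub_pos.2 hy.1)
  · rw [uIcc_of_ge hxc] at hcont hint hsign
    refine antitoneOn_of_hasDerivWithinAt_nonpos (convex_Icc x c) hcont hint (fun y hy => ?_)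
      (left_mem_Icc.2 hxc) (right_mem_Icc.2 hxc) hxc
    rw [interior_Icc] at hy
    exact nonpos_of_mul_nonneg_right (hsign y (Ioo_subset_Icc_self hy)) (sub_neg.2 hy.2)

theorem rpow_neg_tangent_le {α x w : ℝ} (hα : 0 ≤ α) (hx : 0 < x) (hw : 0 < w) :
    w ^ (-α) - α * w ^ (-α - 1) * (x - w) ≤ x ^ (-α) := by
  have hpos : ∀ y ∈ uIcc w x, 0 < y := fun y hy => (lt_min hw hx).trans_le hy.1
  have key := le_of_hasDerivAt_of_sub_mul_nonneg (c := w) (x := x)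
    (f := fun y => y ^ (-α) + α * w ^ (-α - 1) * (y - w))
    (f' := fun y => α * (w ^ (-α - 1) - y ^ (-α - 1)))
    (fun y hy => by
      refine ((Real.hasDerivAt_rpow_const (Or.inl (hpos y hy).ne')).add
        (((hasDerivAt_id' y).sub_const w).const_mul (α * w ^ (-α - 1)))).congr_deriv ?_
      ring)
    (fun y hy => by
      have hy0 := hpos y hy
      rcases le_total w y with h | h
      · exact mul_nonneg (sub_nonneg.2 h) (mul_nonneg hα (sub_nonneg.2
          (Real.rpow_le_rpow_of_nonpos hw h (by linarith))))
      · exact mul_nonneg_of_nonpos_of_nonpos (sub_nonpos.2 h) (mul_nonpos_of_nonneg_of_nonpos hα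
          (sub_nonpos.2 (Real.rpow_le_rpow_of_nonpos hy0 h (by linarith)))))
  simp only [sub_self, mul_zero, add_zero] at key
  linarith

noncomputable def relQOfPres (γ P W : ℝ) : ℝ :=
  (P ^ (1 - 1 / γ) - W ^ (1 - 1 / γ)) / (γ - 1) + W * (P ^ (-1 / γ) - W ^ (-1 / γ))

theorem relQ_eq_relQOfPres {γ v w : ℝ} (hγ : γ ≠ 0) (hv : 0 < v) (hw : 0 < w) :
    relQ γ v w = relQOfPres γ (pres γ v) (pres γ w) := by
  have hvol : ∀ {u : ℝ}, 0 < u → (pres γ u) ^ (-1 / γ) = u := fun hu => by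
    rw [pres, ← Real.rpow_mul hu.le, show -γ * (-1 / γ) = 1 by field_simp, Real.rpow_one]
  have hQ : ∀ {u : ℝ}, 0 < u → (pres γ u) ^ (1 - 1 / γ) = u ^ (1 - γ) := fun hu => by
    rw [pres, ← Real.rpow_mul hu.le, show -γ * (1 - 1 / γ) = 1 - γ by field_simp; ring]
  rw [relQOfPres, hvol hv, hvol hw, hQ hv, hQ hw, relQ, Qint, Qint]
  ring

theorem hasDerivAt_relQOfPres {γ P : ℝ} (W : ℝ) (hγ₀ : γ ≠ 0) (hγ₁ : γ ≠ 1) (hP : 0 < P) :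
    HasDerivAt (fun P => relQOfPres γ P W) ((P - W) * P ^ (-1 / γ - 1) / γ) P := by
  have hd := (((Real.hasDerivAt_rpow_const (p := 1 - 1 / γ) (Or.inl hP.ne')).sub_const
    (W ^ (1 - 1 / γ))).div_const (γ - 1)).add
    (((Real.hasDerivAt_rpow_const (p := -1 / γ) (Or.inl hP.ne')).sub_const
      (W ^ (-1 / γ))).const_mul W)
  refine hd.congr_deriv ?_
  have hγ₁' : γ - 1 ≠ 0 := sub_ne_zero.2 hγ₁
  rw [show 1 - 1 / γ - 1 = -1 / γ by ring, Real.rpow_sub_one hP.ne']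
  field_simp
  ring

theorem relQOfPres_lower_bound {γ P W : ℝ} (hγ₀ : 0 < γ) (hγ₁ : γ ≠ 1) (hP : 0 < P) (hW : 0 < W) :
    W ^ (-1 / γ - 1) / (2 * γ) * |P - W| ^ 2
      - (1 + γ) / (3 * γ ^ 2) * W ^ (-1 / γ - 2) * |P - W| ^ 3 ≤ relQOfPres γ P W := by
  set A := W ^ (-1 / γ - 1) / (2 * γ)
  set B := (1 + γ) / (3 * γ ^ 2) * W ^ (-1 / γ - 2)
  have hpos : ∀ y ∈ uIcc W P, 0 < y := fun y hy => (lt_min hW hP).trans_le hy.1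
  have key := le_of_hasDerivAt_of_sub_mul_nonneg (c := W) (x := P)
    (f := fun y => relQOfPres γ y W - A * (y - W) ^ 2 + B * (y - W) ^ 3)
    (f' := fun y => (y - W) / γ *
      (y ^ (-1 / γ - 1) - (W ^ (-1 / γ - 1) - (1 / γ + 1) * W ^ (-1 / γ - 2) * (y - W))))
    (fun y hy => by
      have hsub := (hasDerivAt_id' y).sub_const W
      refine (((hasDerivAt_relQOfPres W hγ₀.ne' hγ₁ (hpos y hy)).sub
        ((hsub.pow 2).const_mul A)).add ((hsub.pow 3).const_mul B)).congr_deriv ?_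
      simp only [A, B]
      field_simp
      ring)
    (fun y hy => by
      have htangent := rpow_neg_tangent_le (α := 1 / γ + 1) (by positivity) (hpos y hy) hW
      rw [show -(1 / γ + 1) = -1 / γ - 1 by ring, show -1 / γ - 1 - 1 = -1 / γ - 2 by ring]
        at htangent
      rw [← mul_assoc, ← mul_div_assoc, ← sq]
      exact mul_nonneg (by positivity) (sub_nonneg.2 htangent))
  have hB : 0 ≤ B := by positivity
  have hcube : (P - W) ^ 3 ≤ |P - W| ^ 3 := (le_abs_self _).trans (abs_pow _ _).le
  have hzero : relQOfPres γ W W = 0 := by simp [relQOfPres]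
  simp only [hzero, sub_self, zero_pow two_ne_zero, zero_pow three_ne_zero, mul_zero, add_zero] at key
  rw [sq_abs]
  nlinarith [mul_le_mul_of_nonneg_left hcube hB]

theorem relative_internal_energy_lower_bound_general (γ a b : ℝ) (hγ : 1 < γ) :
    ∃ C > 0, ∃ δstar > 0, ∀ δ : ℝ, 0 < δ → δ < δstar →
      ∀ v w : ℝ, 0 < v → 0 < w → |v - w| < δ → w ∈ Set.Icc a b →
        (pres γ w) ^ (-1 / γ - 1) / (2 * γ) * |pres γ v - pres γ w| ^ 2
          - (1 + γ) / (3 * γ ^ 2) * (pres γ w) ^ (-1 / γ - 2) * |pres γ v - pres γ w| ^ 3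
          ≤ relQ γ v w := by
  have hγ₀ : 0 < γ := zero_lt_one.trans hγ
  refine ⟨1, one_pos, 1, one_pos, fun _ _ _ v w hv hw _ _ => ?_⟩
  rw [relQ_eq_relQOfPres hγ₀.ne' hv hw]
  exact relQOfPres_lower_bound hγ₀ hγ.ne' (Real.rpow_pos_of_pos hv _) (Real.rpow_pos_of_pos hw _)

/-- Lower bound of the relative internal energy in terms of the pressure difference,
for `w` in a fixed compact neighborhood `[a,b]` of `v*` and `v` close to `w`. -/
theorem relative_internal_energy_lower_bound (γ vs a b : ℝ) (hγ : 1 < γ) (hvs : 0 < vs)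
    (ha : 0 < a) (hav : a ≤ vs) (hvb : vs ≤ b) :
    ∃ C > 0, ∃ δstar > 0, ∀ δ : ℝ, 0 < δ → δ < δstar →
      ∀ v w : ℝ, 0 < v → 0 < w → |v - w| < δ → w ∈ Set.Icc a b →
        (pres γ w) ^ (-1 / γ - 1) / (2 * γ) * |pres γ v - pres γ w| ^ 2
          - (1 + γ) / (3 * γ ^ 2) * (pres γ w) ^ (-1 / γ - 2) * |pres γ v - pres γ w| ^ 3
          ≤ relQ γ v w :=
  relative_internal_energy_lower_bound_general γ a b hγ
end

section
/- Let δ_{BL}, δ_R > 0 and t ≥ 0. Suppose f, g : [0,∞) → ℝ satisfy 0 ≤ f(ξ) ≤ δ_{BL}/(1+δ_{BL}ξ), |f'(ξ)| ≤ δ_{BL}²/(1+δ_{BL}ξ)², 0 ≤ g(ξ) ≤ δ_R, and 0 ≤ g'(ξ) ≤ δ_R^{1/8}/(1+t)^{7/8} for all ξ ≥ 0. Then ∫₀^t g'(ξ) f(ξ) dξ + ∫_t^∞ |f'(ξ)| g(ξ) dξ ≤ (δ_R^{1/8}/(1+t)^{7/8})·log(1+δ_{BL}t) + δ_{BL}δ_R/(1+δ_{BL}t).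 -/
/-!
On `[0, t]` bound `g'` by its uniform bound and `f` by `δ_BL / (1 + δ_BL ξ)`, the derivative of
`log (1 + δ_BL ξ)`; on `(t, ∞)` bound `g` by `δ_R` and `|f'|` by `δ_BL² / (1 + δ_BL ξ)²`, the
derivative of `-δ_BL / (1 + δ_BL ξ)`, which vanishes at infinity.
-/

open MeasureTheory Set Filter Topology

namespace BoundaryLayerRarefaction

variable {a t : ℝ}

lemma one_add_mul_pos (ha : 0 ≤ a) {x : ℝ} (hx : 0 ≤ x) : 0 < 1 + a * x := by
  nlinarith

lemma hasDerivAt_one_add_mul (a x : ℝ) : HasDerivAt (fun x => 1 + a * x) a x := by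
  simpa using ((hasDerivAt_id x).const_mul a).const_add 1

lemma integral_div_one_add_mul (ha : 0 ≤ a) (ht : 0 ≤ t) :
    ∫ x in (0:ℝ)..t, a / (1 + a * x) = Real.log (1 + a * t) := by
  have hderiv : ∀ x ∈ uIcc 0 t,
      HasDerivAt (fun x => Real.log (1 + a * x)) (a / (1 + a * x)) x := by
    intro x hx
    rw [uIcc_of_le ht] at hx
    simpa [div_eq_inv_mul] using ((hasDerivAt_one_add_mul a x).log (one_add_mul_pos ha hx.1).ne')
  have hcont : ContinuousOn (fun x : ℝ => a / (1 + a * x)) (uIcc 0 t) := by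
    rw [uIcc_of_le ht]
    exact continuousOn_const.div (by fun_prop) fun x hx => (one_add_mul_pos ha hx.1).ne'
  rw [intervalIntegral.integral_eq_sub_of_hasDerivAt hderiv hcont.intervalIntegrable]
  simp

lemma hasDerivAt_neg_div_one_add_mul (ha : 0 ≤ a) {x : ℝ} (hx : 0 ≤ x) :
    HasDerivAt (fun x => -(a / (1 + a * x))) (a ^ 2 / (1 + a * x) ^ 2) x := by
  refine ((hasDerivAt_const x a).div (hasDerivAt_one_add_mul a x)
    (one_add_mul_pos ha hx).ne').neg.congr_deriv ?_
  ring

lemma tendsto_neg_div_one_add_mul_atTop (ha : 0 < a) :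
    Tendsto (fun x => -(a / (1 + a * x))) atTop (𝓝 0) := by
  have hlin : Tendsto (fun x : ℝ => 1 + a * x) atTop atTop :=
    tendsto_atTop_add_const_left _ 1 (tendsto_id.const_mul_atTop ha)
  simpa [div_eq_mul_inv] using (hlin.inv_tendsto_atTop.const_mul a).neg

lemma integrableOn_Ioi_sq_div_one_add_mul_sq (ha : 0 < a) (ht : 0 ≤ t) :
    IntegrableOn (fun x => a ^ 2 / (1 + a * x) ^ 2) (Ioi t) :=
  integrableOn_Ioi_deriv_of_nonneg' (fun x hx => hasDerivAt_neg_div_one_add_mul ha.le (ht.trans hx))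
    (fun _ _ => by positivity) (tendsto_neg_div_one_add_mul_atTop ha)

lemma integral_Ioi_sq_div_one_add_mul_sq (ha : 0 < a) (ht : 0 ≤ t) :
    ∫ x in Ioi t, a ^ 2 / (1 + a * x) ^ 2 = a / (1 + a * t) := by
  rw [integral_Ioi_of_hasDerivAt_of_nonneg'
    (fun x hx => hasDerivAt_neg_div_one_add_mul ha.le (ht.trans hx))
    (fun _ _ => by positivity) (tendsto_neg_div_one_add_mul_atTop ha)]
  simp

lemma intervalIntegral_mul_le_mul_log (ha : 0 ≤ a) (ht : 0 ≤ t) {u v : ℝ → ℝ} {C : ℝ}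
    (hu : ∀ x ∈ Icc 0 t, 0 ≤ u x ∧ u x ≤ C) (hv : ∀ x ∈ Icc 0 t, 0 ≤ v x ∧ v x ≤ a / (1 + a * x))
    (huv : IntervalIntegrable (fun x => u x * v x) volume 0 t) :
    ∫ x in (0:ℝ)..t, u x * v x ≤ C * Real.log (1 + a * t) := by
  have hcont : ContinuousOn (fun x : ℝ => C * (a / (1 + a * x))) (Icc 0 t) :=
    continuousOn_const.mul <|
      continuousOn_const.div (by fun_prop) fun x hx => (one_add_mul_pos ha hx.1).ne'
  calc ∫ x in (0:ℝ)..t, u x * v x ≤ ∫ x in (0:ℝ)..t, C * (a / (1 + a * x)) := by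
        refine intervalIntegral.integral_mono_on ht huv ?_ fun x hx => ?_
        · exact hcont.intervalIntegrable_of_Icc ht
        · exact mul_le_mul (hu x hx).2 (hv x hx).2 (hv x hx).1 ((hu x hx).1.trans (hu x hx).2)
    _ = C * Real.log (1 + a * t) := by
        rw [intervalIntegral.integral_const_mul, integral_div_one_add_mul ha ht]

lemma setIntegral_Ioi_mul_le_mul_div (ha : 0 < a) (ht : 0 ≤ t) {u v : ℝ → ℝ} {M : ℝ}
    (hu : ∀ x ∈ Ioi t, u x ≤ a ^ 2 / (1 + a * x) ^ 2) (hv : ∀ x ∈ Ioi t, 0 ≤ v x ∧ v x ≤ M)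
    (huv : IntegrableOn (fun x => u x * v x) (Ioi t)) :
    ∫ x in Ioi t, u x * v x ≤ M * (a / (1 + a * t)) :=
  calc ∫ x in Ioi t, u x * v x ≤ ∫ x in Ioi t, a ^ 2 / (1 + a * x) ^ 2 * M :=
        setIntegral_mono_on huv ((integrableOn_Ioi_sq_div_one_add_mul_sq ha ht).mul_const M)
          measurableSet_Ioi fun x hx =>
            mul_le_mul (hu x hx) (hv x hx).2 (hv x hx).1 (by positivity)
    _ = M * (a / (1 + a * t)) := by
        rw [integral_mul_const, integral_Ioi_sq_div_one_add_mul_sq ha ht, mul_comm]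

end BoundaryLayerRarefaction

open BoundaryLayerRarefaction in
theorem boundary_layer_rarefaction_interaction_general (δBL δR t : ℝ)
    (hδBL : 0 < δBL) (ht : 0 ≤ t) (f g : ℝ → ℝ)
    (hf : ∀ ξ ≥ (0:ℝ), 0 ≤ f ξ ∧ f ξ ≤ δBL / (1 + δBL * ξ))
    (hf' : ∀ ξ ≥ (0:ℝ), |deriv f ξ| ≤ δBL ^ 2 / (1 + δBL * ξ) ^ 2)
    (hg : ∀ ξ ≥ (0:ℝ), 0 ≤ g ξ ∧ g ξ ≤ δR)
    (hg' : ∀ ξ ≥ (0:ℝ), 0 ≤ deriv g ξ ∧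
      deriv g ξ ≤ δR ^ ((1:ℝ)/8) / (1 + t) ^ ((7:ℝ)/8))
    (hint1 : IntervalIntegrable (fun ξ => deriv g ξ * f ξ) volume 0 t)
    (hint2 : IntegrableOn (fun ξ => |deriv f ξ| * g ξ) (Set.Ioi t)) :
    (∫ ξ in (0:ℝ)..t, deriv g ξ * f ξ) + (∫ ξ in Set.Ioi t, |deriv f ξ| * g ξ)
      ≤ δR ^ ((1:ℝ)/8) / (1 + t) ^ ((7:ℝ)/8) * Real.log (1 + δBL * t)
        + δBL * δR / (1 + δBL * t) := by
  have hnear := intervalIntegral_mul_le_mul_log hδBL.le ht (fun x hx => hg' x hx.1)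
    (fun x hx => hf x hx.1) hint1
  have hfar := setIntegral_Ioi_mul_le_mul_div hδBL ht
    (fun x hx => hf' x (ht.trans hx.le)) (fun x hx => hg x (ht.trans hx.le)) hint2
  calc _ ≤ _ := add_le_add hnear hfar
    _ = _ := by ring

/-- Interaction estimate between a boundary-layer-type profile `f` (algebraic decay of
rate `δ_{BL}`) and a rarefaction-type profile `g`, obtained by splitting at `ξ = t`. -/
theorem boundary_layer_rarefaction_interaction (δBL δR t : ℝ)
    (hδBL : 0 < δBL) (hδR : 0 < δR) (ht : 0 ≤ t) (f g : ℝ → ℝ)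
    (hf : ∀ ξ ≥ (0:ℝ), 0 ≤ f ξ ∧ f ξ ≤ δBL / (1 + δBL * ξ))
    (hf' : ∀ ξ ≥ (0:ℝ), |deriv f ξ| ≤ δBL ^ 2 / (1 + δBL * ξ) ^ 2)
    (hg : ∀ ξ ≥ (0:ℝ), 0 ≤ g ξ ∧ g ξ ≤ δR)
    (hg' : ∀ ξ ≥ (0:ℝ), 0 ≤ deriv g ξ ∧
      deriv g ξ ≤ δR ^ ((1:ℝ)/8) / (1 + t) ^ ((7:ℝ)/8))
    (hint1 : IntervalIntegrable (fun ξ => deriv g ξ * f ξ) volume 0 t)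
    (hint2 : IntegrableOn (fun ξ => |deriv f ξ| * g ξ) (Set.Ioi t)) :
    (∫ ξ in (0:ℝ)..t, deriv g ξ * f ξ) + (∫ ξ in Set.Ioi t, |deriv f ξ| * g ξ)
      ≤ δR ^ ((1:ℝ)/8) / (1 + t) ^ ((7:ℝ)/8) * Real.log (1 + δBL * t)
        + δBL * δR / (1 + δBL * t) :=
  boundary_layer_rarefaction_interaction_general δBL δR t hδBL ht f g hf hf' hg hg' hint1 hint2
end

section
/- Let δ_S, δ_{BL}, c > 0, b > 0, and let V : ℝ → ℝ satisfy 0 < V'(ζ) and |V'(ζ)| ≤ δ_S² e^{−cδ_S|ζ|} for all ζ, and let W : [0,∞) → ℝ satisfy |W'(ξ)| ≤ δ_{BL}²/(1+δ_{BL}ξ)² and |W(ξ) − w*| ≤ δ_{BL}/(1+δ_{BL}ξ). Suppose the argument shift is such that |ξ − s(t)| ≥ −ξ + (3/2)bt for ξ ∈ [0, bt], where s(t) ≥ (3/2)bt. Then ∫₀^∞ |V'(ξ − s(t))|²|W(ξ) − w*|² dξ ≤ C(δ_S³δ_{BL}² e^{−c'δ_S t} + δ_S³δ_{BL}²/(1+δ_{BL}t)²)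 for constants C, c' > 0 independent of t, δ_S, δ_{BL}. -/
/-!
Split the integral at `ξ = b t`. On `(0, b t]` the shift hypothesis keeps the shock at distance
at least `b t / 2`, so `|V'|² ≤ δS⁴ e^{-c δS b t}` there while `|W - w*| ≤ δBL`; the length `b t`
of the interval is absorbed by half of the exponential. On `(b t, ∞)` the boundary layer is already
`δBL / (1 + δBL b t)`-close to `w*`, and `|V'|²` integrates to at most `δS⁴ ∫ e^{-2 c δS |ζ|} dζ`,
which is `δS³ / c`.
-/

open MeasureTheory Set Real

theorem integral_exp_neg_mul_abs {κ : ℝ} (hκ : 0 < κ) : ∫ x, exp (-κ * |x|) = 2 / κ := by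
  rw [integral_comp_abs (f := fun x => exp (-κ * x)), integral_exp_mul_Ioi (neg_lt_zero.2 hκ)]
  field_simp
  simp

theorem integrable_exp_neg_mul_abs {κ : ℝ} (hκ : 0 < κ) : Integrable fun x => exp (-κ * |x|) :=
  .of_integral_ne_zero (by rw [integral_exp_neg_mul_abs hκ]; positivity)

theorem setIntegral_exp_neg_mul_abs_sub_le {κ : ℝ} (hκ : 0 < κ) (S : Set ℝ) (s : ℝ) :
    ∫ x in S, exp (-κ * |x - s|) ≤ 2 / κ := by
  calc ∫ x in S, exp (-κ * |x - s|) ≤ ∫ x, exp (-κ * |x - s|) :=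
        setIntegral_le_integral ((integrable_exp_neg_mul_abs hκ).comp_sub_right s)
          (.of_forall fun _ => (exp_pos _).le)
    _ = 2 / κ := by
      rw [integral_sub_right_eq_self (fun x => exp (-κ * |x|)), integral_exp_neg_mul_abs hκ]

theorem mul_exp_neg_mul_le {κ x : ℝ} (hκ : 0 < κ) :
    x * exp (-κ * x) ≤ 2 / κ * exp (-κ * x / 2) := by
  have hexp := add_one_le_exp (κ * x / 2)
  have hsplit : exp (-κ * x) = exp (-κ * x / 2) * exp (-κ * x / 2) := by
    rw [← exp_add]; ring_nf
  have hinv : exp (κ * x / 2) * exp (-κ * x / 2) = 1 := by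
    rw [← exp_add]; ring_nf; simp
  rw [hsplit, div_mul_eq_mul_div, le_div_iff₀ hκ]
  nlinarith [exp_pos (-κ * x / 2)]

theorem sq_abs_le_of_abs_le_mul_exp {y A κ r : ℝ} (h : |y| ≤ A * exp (-κ * r)) :
    |y| ^ 2 ≤ A ^ 2 * exp (-(2 * κ) * r) := by
  calc |y| ^ 2 ≤ (A * exp (-κ * r)) ^ 2 := pow_le_pow_left₀ (abs_nonneg y) h 2
    _ = A ^ 2 * exp (-(2 * κ) * r) := by rw [mul_pow, ← exp_nat_mul]; ring_nf

theorem one_add_mul_le_max_inv_mul {b δ t : ℝ} (hb : 0 < b) (hδt : 0 ≤ δ * t) :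
    1 + δ * t ≤ max 1 b⁻¹ * (1 + δ * (b * t)) := by
  have h1 : 1 ≤ max 1 b⁻¹ := le_max_left _ _
  have hb' : 1 ≤ max 1 b⁻¹ * b := by
    simpa [hb.ne'] using mul_le_mul_of_nonneg_right (le_max_right 1 b⁻¹) hb.le
  nlinarith

section Interaction

variable {v w : ℝ → ℝ} {A κ δ s : ℝ}

theorem setIntegral_Ioc_sq_mul_sq_le_of_separated (hκ : 0 ≤ κ) (hδ : 0 ≤ δ)
    (hv : ∀ ζ, |v ζ| ≤ A * exp (-κ * |ζ|)) (hw : ∀ ξ ≥ 0, |w ξ| ≤ δ / (1 + δ * ξ))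
    {a d : ℝ} (ha : 0 ≤ a) (hsep : ∀ ξ ∈ Ioc 0 a, d ≤ |ξ - s|) :
    ∫ ξ in Ioc 0 a, |v (ξ - s)| ^ 2 * |w ξ| ^ 2 ≤ A ^ 2 * exp (-(2 * κ) * d) * δ ^ 2 * a := by
  have hbound : ∀ ξ ∈ Ioc 0 a,
      ‖|v (ξ - s)| ^ 2 * |w ξ| ^ 2‖ ≤ A ^ 2 * exp (-(2 * κ) * d) * δ ^ 2 := by
    intro ξ hξ
    have hvξ : |v (ξ - s)| ^ 2 ≤ A ^ 2 * exp (-(2 * κ) * d) :=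
      (sq_abs_le_of_abs_le_mul_exp (hv _)).trans <| mul_le_mul_of_nonneg_left
        (exp_le_exp.2 (mul_le_mul_of_nonpos_left (hsep ξ hξ) (by linarith))) (sq_nonneg A)
    have hwξ : |w ξ| ≤ δ := (hw ξ hξ.1.le).trans <| div_le_self hδ (by nlinarith [hξ.1])
    rw [Real.norm_of_nonneg (by positivity)]
    gcongr
  calc ∫ ξ in Ioc 0 a, |v (ξ - s)| ^ 2 * |w ξ| ^ 2
      ≤ ‖∫ ξ in Ioc 0 a, |v (ξ - s)| ^ 2 * |w ξ| ^ 2‖ := le_abs_self _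
    _ ≤ A ^ 2 * exp (-(2 * κ) * d) * δ ^ 2 * a := by
      simpa [Real.volume_real_Ioc_of_le ha] using
        norm_setIntegral_le_of_norm_le_const (μ := volume) measure_Ioc_lt_top hbound

theorem setIntegral_Ioi_sq_mul_sq_le (hκ : 0 < κ) (hδ : 0 ≤ δ)
    (hv : ∀ ζ, |v ζ| ≤ A * exp (-κ * |ζ|)) (hw : ∀ ξ ≥ 0, |w ξ| ≤ δ / (1 + δ * ξ))
    {a : ℝ} (ha : 0 ≤ a) (hf : IntegrableOn (fun ξ => |v (ξ - s)| ^ 2 * |w ξ| ^ 2) (Ioi a)) :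
    ∫ ξ in Ioi a, |v (ξ - s)| ^ 2 * |w ξ| ^ 2 ≤ A ^ 2 * (δ / (1 + δ * a)) ^ 2 / κ := by
  have hbound : ∀ ξ ∈ Ioi a, |v (ξ - s)| ^ 2 * |w ξ| ^ 2
      ≤ A ^ 2 * (δ / (1 + δ * a)) ^ 2 * exp (-(2 * κ) * |ξ - s|) := by
    intro ξ hξ
    have hwξ : |w ξ| ≤ δ / (1 + δ * a) := (hw ξ (ha.trans hξ.le)).trans <|
      div_le_div_of_nonneg_left hδ (by positivity) (by gcongr; exact hξ.le)
    calc |v (ξ - s)| ^ 2 * |w ξ| ^ 2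
        ≤ A ^ 2 * exp (-(2 * κ) * |ξ - s|) * (δ / (1 + δ * a)) ^ 2 := by
          gcongr
          exact sq_abs_le_of_abs_le_mul_exp (hv _)
      _ = _ := by ring
  have hexp_int : IntegrableOn (fun ξ => exp (-(2 * κ) * |ξ - s|)) (Ioi a) :=
    ((integrable_exp_neg_mul_abs (by positivity)).comp_sub_right s).integrableOn
  calc ∫ ξ in Ioi a, |v (ξ - s)| ^ 2 * |w ξ| ^ 2
      ≤ ∫ ξ in Ioi a, A ^ 2 * (δ / (1 + δ * a)) ^ 2 * exp (-(2 * κ) * |ξ - s|) :=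
        setIntegral_mono_on hf (hexp_int.const_mul _) measurableSet_Ioi hbound
    _ ≤ A ^ 2 * (δ / (1 + δ * a)) ^ 2 * (2 / (2 * κ)) := by
        rw [integral_const_mul]
        gcongr
        exact setIntegral_exp_neg_mul_abs_sub_le (by positivity) _ s
    _ = A ^ 2 * (δ / (1 + δ * a)) ^ 2 / κ := by field_simp

end Interaction

section ShockBoundaryLayer

variable {c b δS δBL t : ℝ}

theorem shock_region_bound_le (hc : 0 < c) (hδS : 0 < δS) :
    (δS ^ 2) ^ 2 * exp (-(2 * (c * δS)) * (b * t / 2)) * δBL ^ 2 * (b * t)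
      ≤ 2 / c * (δS ^ 3 * δBL ^ 2 * exp (-(c * b / 2 * δS) * t)) := by
  rw [show -(2 * (c * δS)) * (b * t / 2) = -(c * δS) * (b * t) by ring,
    show -(c * b / 2 * δS) * t = -(c * δS) * (b * t) / 2 by ring]
  calc (δS ^ 2) ^ 2 * exp (-(c * δS) * (b * t)) * δBL ^ 2 * (b * t)
      = δS ^ 4 * δBL ^ 2 * (b * t * exp (-(c * δS) * (b * t))) := by ring
    _ ≤ δS ^ 4 * δBL ^ 2 * (2 / (c * δS) * exp (-(c * δS) * (b * t) / 2)) := by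
      gcongr _ * ?_
      exact mul_exp_neg_mul_le (mul_pos hc hδS)
    _ = _ := by field_simp

theorem boundary_layer_region_bound_le (hc : 0 < c) (hb : 0 < b) (hδS : 0 < δS)
    (hδBL : 0 < δBL) (ht : 0 ≤ t) :
    (δS ^ 2) ^ 2 * (δBL / (1 + δBL * (b * t))) ^ 2 / (c * δS)
      ≤ max 1 b⁻¹ ^ 2 / c * (δS ^ 3 * δBL ^ 2 / (1 + δBL * t) ^ 2) := by
  have hM : 0 < max 1 b⁻¹ := lt_max_of_lt_left one_pos
  calc (δS ^ 2) ^ 2 * (δBL / (1 + δBL * (b * t))) ^ 2 / (c * δS)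
      = δS ^ 3 * δBL ^ 2 / c / (1 + δBL * (b * t)) ^ 2 := by field_simp
    _ ≤ δS ^ 3 * δBL ^ 2 / c / ((1 + δBL * t) / max 1 b⁻¹) ^ 2 := by
      gcongr
      rw [div_le_iff₀' hM]
      exact one_add_mul_le_max_inv_mul hb (by positivity)
    _ = _ := by field_simp

end ShockBoundaryLayer

/-- L² interaction estimate between the derivative of a viscous-shock-type profile `V`
(exponentially localized around the moving shock location `s(t)`) and a
boundary-layer-type profile `W` decaying algebraically to `w*`. -/
theorem shock_boundary_layer_L2_interaction (c b ws : ℝ) (hc : 0 < c) (hb : 0 < b) :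
    ∃ C > 0, ∃ c' > 0, ∀ (δS δBL : ℝ), 0 < δS → 0 < δBL →
      ∀ (V W : ℝ → ℝ) (s t : ℝ), 0 ≤ t →
      (∀ ζ : ℝ, 0 < deriv V ζ ∧ |deriv V ζ| ≤ δS ^ 2 * Real.exp (-(c * δS) * |ζ|)) →
      (∀ ξ ≥ (0:ℝ), |deriv W ξ| ≤ δBL ^ 2 / (1 + δBL * ξ) ^ 2 ∧
        |W ξ - ws| ≤ δBL / (1 + δBL * ξ)) →
      (3/2) * b * t ≤ s →
      (∀ ξ ∈ Set.Icc (0:ℝ) (b * t), -ξ + (3/2) * b * t ≤ |ξ - s|) →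
      ∫ ξ in Set.Ioi (0:ℝ), |deriv V (ξ - s)| ^ 2 * |W ξ - ws| ^ 2
        ≤ C * (δS ^ 3 * δBL ^ 2 * Real.exp (-(c' * δS) * t)
            + δS ^ 3 * δBL ^ 2 / (1 + δBL * t) ^ 2) := by
  refine ⟨2 / c + max 1 b⁻¹ ^ 2 / c, by positivity, c * b / 2, by positivity, ?_⟩
  intro δS δBL hδS hδBL V W s t ht hV hW _ hshift
  have hbt : 0 ≤ b * t := by positivity
  by_cases hf : IntegrableOn (fun ξ => |deriv V (ξ - s)| ^ 2 * |W ξ - ws| ^ 2) (Ioi 0)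
  swap
  · rw [integral_undef hf]; positivity
  have hv := fun ζ => (hV ζ).2
  have hw := fun ξ hξ => (hW ξ hξ).2
  have hsep : ∀ ξ ∈ Ioc 0 (b * t), b * t / 2 ≤ |ξ - s| := fun ξ hξ => by
    linarith [hshift ξ ⟨hξ.1.le, hξ.2⟩, hξ.2]
  have near := (setIntegral_Ioc_sq_mul_sq_le_of_separated (by positivity) hδBL.le hv hw hbt
    hsep).trans (shock_region_bound_le hc hδS)
  have far := (setIntegral_Ioi_sq_mul_sq_le (by positivity) hδBL.le hv hw hbt
    (hf.mono_set (Ioi_subset_Ioi hbt))).trans (boundary_layer_region_bound_le hc hb hδS hδBL ht)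
  rw [← Ioc_union_Ioi_eq_Ioi hbt, setIntegral_union Ioc_disjoint_Ioi_same measurableSet_Ioi
    (hf.mono_set Ioc_subset_Ioi_self) (hf.mono_set (Ioi_subset_Ioi hbt))]
  refine (add_le_add near far).trans ?_
  rw [add_mul, mul_add, mul_add]
  exact add_le_add (le_add_of_nonneg_right (by positivity)) (le_add_of_nonneg_left (by positivity))
end
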